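/- arXiv:quant-ph/0411043 — 2 statements merged into one kernel-verified Lean document; each statement's English description precedes it below -/
import Mathlib

section
/- For a positive linear map T : Mₙ(ℂ) → Mₘ(ℂ), the Choi matrix H = Σ_{k,l} e_{kl} ⊗ T(e_{kl}) is self-adjoint and block-positive: ⟨x ⊗ y, H (x ⊗ y)⟩ ≥ 0 for all x ∈ ℂⁿ, y ∈ ℂᵐ. Moreover H is the unique such matrix with T_H = T. -/
open Matrix
open scoped ComplexOrder

/-- The elementary tensor `x ⊗ y ∈ ℂⁿ ⊗ ℂᵐ`. -/
def tensorVec {n m : ℕ} (x : Fin n → ℂ) (y : Fin m → ℂ) : Fin n × Fin m → ℂ :=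
  fun p => x p.1 * y p.2

/-- The Choi matrix `H = Σ_{k,l} e_{kl} ⊗ T(e_{kl})` of a linear map `T`. -/
noncomputable def choiMatrix {n m : ℕ}
    (T : Matrix (Fin n) (Fin n) ℂ →ₗ[ℂ] Matrix (Fin m) (Fin m) ℂ) :
    Matrix (Fin n × Fin m) (Fin n × Fin m) ℂ :=
  Matrix.of fun p q => T (Matrix.single p.1 q.1 1) p.2 q.2

/-!
A complex-linear map that sends self-adjoint elements to self-adjoint ones commutes with the star
(split into real and imaginary parts), and a positive map on matrices does send Hermitian matrices
to Hermitian ones, because each is a difference of positive semidefinite matrices. Since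
`(choiMatrix T)ᴴ` has the blocks `T (e_lk)ᴴ = T (e_kl)`, this makes the Choi matrix self-adjoint.
Expanding `⟨x ⊗ y, H (x ⊗ y)⟩ = ⟨y, T_H (x̄ xᵀ) y⟩` shows block positivity, as `x̄ xᵀ ≥ 0`, and
evaluating `T_H` on the matrix units recovers the blocks of `H`, which gives uniqueness.
-/

open scoped ComplexStarModule in
theorem LinearMap.map_star_of_map_isSelfAdjoint {A B : Type*} [AddCommGroup A] [Module ℂ A]
    [StarAddMonoid A] [StarModule ℂ A] [AddCommGroup B] [Module ℂ B] [StarAddMonoid B]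
    [StarModule ℂ B] (f : A →ₗ[ℂ] B) (hf : ∀ a, IsSelfAdjoint a → IsSelfAdjoint (f a)) (a : A) :
    f (star a) = star (f a) := by
  rw [← realPart_add_I_smul_imaginaryPart a]
  simp only [star_add, star_smul, map_add, map_smul, (ℜ a).2.star_eq, (ℑ a).2.star_eq,
    (hf _ (ℜ a).2).star_eq, (hf _ (ℑ a).2).star_eq, Complex.star_def, Complex.conj_I, neg_smul,
    map_neg]

section PositiveMap

open scoped MatrixOrder Matrix.Norms.L2Operator

variable {ι κ : Type*} [Fintype ι] [DecidableEq ι]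

theorem LinearMap.isHermitian_apply_of_map_posSemidef (T : Matrix ι ι ℂ →ₗ[ℂ] Matrix κ κ ℂ)
    (hT : ∀ a, a.PosSemidef → (T a).PosSemidef) {a : Matrix ι ι ℂ} (ha : a.IsHermitian) :
    (T a).IsHermitian := by
  obtain ⟨b, c, hb, hc, rfl⟩ := ha.isSelfAdjoint.exists_nonneg_sub_nonneg
  rw [map_sub]
  exact (hT b hb.posSemidef).isHermitian.sub (hT c hc.posSemidef).isHermitian

theorem LinearMap.map_conjTranspose_of_map_posSemidef (T : Matrix ι ι ℂ →ₗ[ℂ] Matrix κ κ ℂ)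
    (hT : ∀ a, a.PosSemidef → (T a).PosSemidef) (a : Matrix ι ι ℂ) : T aᴴ = (T a)ᴴ :=
  T.map_star_of_map_isSelfAdjoint (fun _ ha => T.isHermitian_apply_of_map_posSemidef hT ha) a

end PositiveMap

section Choi

variable {n m : ℕ}

/-- The map `T_H` determined by a block matrix `H`. -/
def mapOfChoi (H : Matrix (Fin n × Fin m) (Fin n × Fin m) ℂ) (a : Matrix (Fin n) (Fin n) ℂ) :
    Matrix (Fin m) (Fin m) ℂ :=
  of fun k l => ∑ i, ∑ j, a i j * H (i, k) (j, l)

theorem mapOfChoi_single (H : Matrix (Fin n × Fin m) (Fin n × Fin m) ℂ) (i j : Fin n) :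
    mapOfChoi H (single i j 1) = of fun k l => H (i, k) (j, l) := by
  ext k l
  simp [mapOfChoi, single_apply, ite_and]

theorem mapOfChoi_choiMatrix (T : Matrix (Fin n) (Fin n) ℂ →ₗ[ℂ] Matrix (Fin m) (Fin m) ℂ)
    (a : Matrix (Fin n) (Fin n) ℂ) : mapOfChoi (choiMatrix T) a = T a := by
  have hsingle : ∀ i j, single i j (a i j) = a i j • single i j 1 := by simp
  conv_rhs => rw [matrix_eq_sum_single a]
  ext k l
  simp only [hsingle, map_sum, map_smul, Matrix.sum_apply, Matrix.smul_apply, smul_eq_mul,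
    mapOfChoi, choiMatrix, of_apply]

theorem star_tensorVec_dotProduct_mulVec (H : Matrix (Fin n × Fin m) (Fin n × Fin m) ℂ)
    (x : Fin n → ℂ) (y : Fin m → ℂ) :
    star (tensorVec x y) ⬝ᵥ H *ᵥ tensorVec x y =
      star y ⬝ᵥ mapOfChoi H (vecMulVec (star x) x) *ᵥ y := by
  simp only [dotProduct, mulVec, mapOfChoi, tensorVec, vecMulVec_apply, of_apply, Pi.star_apply,
    star_mul', Fintype.sum_prod_type, Finset.mul_sum, Finset.sum_mul]
  rw [Finset.sum_comm]
  refine Finset.sum_congr rfl fun a _ => ?_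
  conv_rhs => rw [Finset.sum_comm]
  refine Finset.sum_congr rfl fun i _ => ?_
  rw [Finset.sum_comm]
  exact Finset.sum_congr rfl fun b _ => Finset.sum_congr rfl fun j _ => by ring

theorem choiMatrix_conjTranspose (T : Matrix (Fin n) (Fin n) ℂ →ₗ[ℂ] Matrix (Fin m) (Fin m) ℂ)
    (hT : ∀ a, T aᴴ = (T a)ᴴ) : (choiMatrix T)ᴴ = choiMatrix T := by
  ext ⟨k, a⟩ ⟨l, b⟩
  simp only [conjTranspose_apply, choiMatrix, of_apply]
  rw [← conjTranspose_apply, ← hT, conjTranspose_single, star_one]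

end Choi

/-- The Choi matrix of a positive map is self-adjoint and block-positive, and it is
the unique matrix `H` with `T_H = T`. -/
theorem choiMatrix_selfAdjoint_blockPositive_unique {n m : ℕ}
    (T : Matrix (Fin n) (Fin n) ℂ →ₗ[ℂ] Matrix (Fin m) (Fin m) ℂ)
    (hT : ∀ a : Matrix (Fin n) (Fin n) ℂ, a.PosSemidef → (T a).PosSemidef) :
    (choiMatrix T)ᴴ = choiMatrix T ∧
    (∀ (x : Fin n → ℂ) (y : Fin m → ℂ),
      0 ≤ (star (tensorVec x y) ⬝ᵥ (choiMatrix T).mulVec (tensorVec x y)).re) ∧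
    (∀ H : Matrix (Fin n × Fin m) (Fin n × Fin m) ℂ,
      (∀ a : Matrix (Fin n) (Fin n) ℂ,
        T a = Matrix.of fun k l => ∑ i, ∑ j, a i j * H (i, k) (j, l)) →
      H = choiMatrix T) := by
  refine ⟨choiMatrix_conjTranspose T (T.map_conjTranspose_of_map_posSemidef hT), fun x y => ?_,
    fun H hH => ?_⟩
  · have hx : (vecMulVec (star x) x).PosSemidef := by
      simpa using posSemidef_vecMulVec_self_star (star x)
    rw [star_tensorVec_dotProduct_mulVec, mapOfChoi_choiMatrix]
    exact (Complex.nonneg_iff.mp ((hT _ hx).dotProduct_mulVec_nonneg y)).1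
  · ext ⟨i, k⟩ ⟨j, l⟩
    have hij : T (single i j 1) = mapOfChoi H (single i j 1) := hH _
    rw [mapOfChoi_single] at hij
    simpa [choiMatrix] using (congr_fun₂ hij k l).symm
end

section
/- A linear map T : Mₙ(ℂ) → Mₘ(ℂ) is completely positive if and only if its Choi matrix H = Σ_{k,l} e_{kl} ⊗ T(e_{kl}) ∈ M_{nm}(ℂ) is positive semidefinite. -/
open Matrix
open scoped ComplexOrder

/-- `T` is completely positive: `id_k ⊗ T` is a positive map for every `k`. -/
def IsCompletelyPositive {n m : ℕ}
    (T : Matrix (Fin n) (Fin n) ℂ →ₗ[ℂ] Matrix (Fin m) (Fin m) ℂ) : Prop :=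
  ∀ (k : ℕ) (A : Matrix (Fin k × Fin n) (Fin k × Fin n) ℂ), A.PosSemidef →
    Matrix.PosSemidef
      (Matrix.of fun p q : Fin k × Fin m =>
        T (Matrix.of fun i j => A (p.1, i) (q.1, j)) p.2 q.2)

/-!
Expanding `X = Σ X_ij e_ij` gives `T X = Σ_{i,j} X_ij H_{(i,·),(j,·)}`, where `H` is the Choi
matrix. Hence `(id ⊗ T) A` is the compression `Vᴴ (A ⊗ H) V` of a Kronecker product by the 0/1
matrix `V` with `V (a, i, i, r) (a, r) = 1`, and Kronecker products of positive semidefinite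
matrices are positive semidefinite. Conversely, `H` itself is `(id_n ⊗ T)`
applied to the rank-one positive matrix `ΩΩᴴ`, where `Ω = Σ_i e_i ⊗ e_i`.
-/

open scoped Kronecker

/-- The ampliation `id_κ ⊗ T`. -/
noncomputable def ampliation {n m : ℕ}
    (T : Matrix (Fin n) (Fin n) ℂ →ₗ[ℂ] Matrix (Fin m) (Fin m) ℂ) {κ : Type*}
    (A : Matrix (κ × Fin n) (κ × Fin n) ℂ) : Matrix (κ × Fin m) (κ × Fin m) ℂ :=
  of fun p q => T (of fun i j => A (p.1, i) (q.1, j)) p.2 q.2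

def maximallyEntangled {R : Type*} [Zero R] [One R] (ι : Type*) [DecidableEq ι] :
    ι × ι → R :=
  fun x => if x.1 = x.2 then 1 else 0

def contraction (R : Type*) [Zero R] [One R] (κ ι ρ : Type*)
    [DecidableEq κ] [DecidableEq ι] [DecidableEq ρ] :
    Matrix ((κ × ι) × (ι × ρ)) (κ × ρ) R :=
  of fun x p => if x.1.1 = p.1 ∧ x.1.2 = x.2.1 ∧ x.2.2 = p.2 then 1 else 0

lemma conjTranspose_contraction_mul_mul_apply {R : Type*} [Semiring R] [StarRing R]
    {κ ι ρ : Type*} [Fintype κ] [Fintype ι] [Fintype ρ]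
    [DecidableEq κ] [DecidableEq ι] [DecidableEq ρ]
    (M : Matrix ((κ × ι) × (ι × ρ)) ((κ × ι) × (ι × ρ)) R) (p q : κ × ρ) :
    ((contraction R κ ι ρ)ᴴ * M * contraction R κ ι ρ) p q =
      ∑ i, ∑ j, M ((p.1, i), (i, p.2)) ((q.1, j), (j, q.2)) := by
  rw [Finset.sum_comm]
  simp [contraction, mul_apply, Fintype.sum_prod_type, ite_and, apply_ite star, ite_mul,
    mul_ite]

lemma apply_eq_sum_choiMatrix {n m : ℕ}
    (T : Matrix (Fin n) (Fin n) ℂ →ₗ[ℂ] Matrix (Fin m) (Fin m) ℂ)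
    (X : Matrix (Fin n) (Fin n) ℂ) (r s : Fin m) :
    T X r s = ∑ i, ∑ j, X i j * choiMatrix T (i, r) (j, s) := by
  have hsingle : ∀ i j, single i j (X i j) = X i j • single i j 1 := fun i j => by
    rw [smul_single, smul_eq_mul, mul_one]
  conv_lhs => rw [matrix_eq_sum_single X]
  simp only [hsingle, map_sum, map_smul, Matrix.sum_apply, Matrix.smul_apply, smul_eq_mul]
  rfl

lemma ampliation_eq_contraction_kronecker {n m : ℕ}
    (T : Matrix (Fin n) (Fin n) ℂ →ₗ[ℂ] Matrix (Fin m) (Fin m) ℂ) {κ : Type*} [Fintype κ]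
    [DecidableEq κ] (A : Matrix (κ × Fin n) (κ × Fin n) ℂ) :
    ampliation T A = (contraction ℂ κ (Fin n) (Fin m))ᴴ * (A ⊗ₖ choiMatrix T) *
      contraction ℂ κ (Fin n) (Fin m) := by
  ext p q
  rw [conjTranspose_contraction_mul_mul_apply, ampliation, of_apply, apply_eq_sum_choiMatrix]
  rfl

lemma ampliation_vecMulVec_maximallyEntangled {n m : ℕ}
    (T : Matrix (Fin n) (Fin n) ℂ →ₗ[ℂ] Matrix (Fin m) (Fin m) ℂ) :
    ampliation T (vecMulVec (maximallyEntangled (Fin n)) (star (maximallyEntangled (Fin n)))) =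
      choiMatrix T := by
  ext p q
  simp only [ampliation, choiMatrix, of_apply]
  refine congrFun (congrFun (congrArg T ?_) _) _
  ext i j
  simp [maximallyEntangled, vecMulVec_apply, single_apply, ← ite_and, and_comm]

/-- Choi's theorem: `T` is completely positive iff its Choi matrix is positive
semidefinite. -/
theorem choi_theorem {n m : ℕ}
    (T : Matrix (Fin n) (Fin n) ℂ →ₗ[ℂ] Matrix (Fin m) (Fin m) ℂ) :
    IsCompletelyPositive T ↔ (choiMatrix T).PosSemidef := by
  refine ⟨fun hT => ?_, fun hH k A hA => ?_⟩
  · rw [← ampliation_vecMulVec_maximallyEntangled]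
    exact hT n _ (posSemidef_vecMulVec_self_star _)
  · change (ampliation T A).PosSemidef
    rw [ampliation_eq_contraction_kronecker]
    exact (hA.kronecker hH).conjTranspose_mul_mul_same _
end
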